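/- arXiv:0807.2360 — 2 statements merged into one kernel-verified Lean document; each statement's English description precedes it below -/
import Mathlib

section
/- Let {A_k ⊗ B_k}_{k=1}^N be product operators on H_A ⊗ H_B (dim H_A = dim H_B = D) and |ψ⟩ a pure state. Then for every 1 ≤ n ≤ D, Σ_k χ_n(Tr_A[(A_k⊗B_k)|ψ⟩⟨ψ|(A_k⊗B_k)†]) ≤ ‖R‖ · χ_n(Tr_A|ψ⟩⟨ψ|), where R = Σ_k A_k†A_k ⊗ B_k†B_k and ‖R‖ is its operator norm. -/
open Matrix BigOperators Kronecker

/-- Sum of the `n` smallest eigenvalues (with multiplicity) of a Hermitian matrix. -/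
noncomputable def chi {D : ℕ} (n : ℕ) (M : Matrix (Fin D) (Fin D) ℂ) : ℝ :=
  if hM : M.IsHermitian then
    sInf {x : ℝ | ∃ s : Finset (Fin D), s.card = n ∧ x = ∑ i ∈ s, hM.eigenvalues i}
  else 0

/-- Largest eigenvalue of a Hermitian matrix (the operator norm for positive matrices). -/
noncomputable def maxEig {m : Type*} [Fintype m] [DecidableEq m]
    (M : Matrix m m ℂ) : ℝ :=
  if hM : M.IsHermitian then sSup {x : ℝ | ∃ i, x = hM.eigenvalues i} else 0

/-- Partial trace over the `A` factor, in matrix form. -/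
noncomputable def ptraceA {DA DB : ℕ} (M : Matrix (Fin DA × Fin DB) (Fin DA × Fin DB) ℂ) :
    Matrix (Fin DB) (Fin DB) ℂ :=
  Matrix.of fun j j' => ∑ a : Fin DA, M (a, j) (a, j')

/-!
Let `ρ = Tr_A |ψ⟩⟨ψ|`, let `P` project onto the eigenvectors of its `n` smallest eigenvalues and
put `ψ_S = (1 ⊗ P) ψ`, so that `‖ψ_S‖² = χₙ(ρ)`. As `1 - P` has rank `D - n`, the kernel of
`(B_k (1 - P))ᴴ` contains an orthonormal `n`-frame, and on it the adjoints of the coefficient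
matrices of `(A_k ⊗ B_k) ψ` and `(A_k ⊗ B_k) ψ_S` agree. Ky Fan's minimum principle and Bessel's
inequality then bound `χₙ(Tr_A[(A_k ⊗ B_k)|ψ⟩⟨ψ|(A_k ⊗ B_k)ᴴ])` by `‖(A_k ⊗ B_k) ψ_S‖²`, and the sum
of these over `k` is `⟨ψ_S, R ψ_S⟩ ≤ ‖R‖ ‖ψ_S‖²`.
-/

open scoped InnerProductSpace

lemma re_star_dotProduct_self_eq_norm_sq {m : Type*} [Fintype m] (x : m → ℂ) :
    (star x ⬝ᵥ x).re = ‖WithLp.toLp 2 x‖ ^ 2 := by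
  rw [dotProduct_comm, ← EuclideanSpace.inner_toLp_toLp, ← inner_self_eq_norm_sq (𝕜 := ℂ)]
  rfl

lemma star_mulVec_dotProduct_mulVec {m α : Type*} [Fintype m] [Fintype α] (M : Matrix m α ℂ)
    (x : α → ℂ) : star (M *ᵥ x) ⬝ᵥ (M *ᵥ x) = star x ⬝ᵥ (Mᴴ * M) *ᵥ x := by
  rw [star_mulVec, ← dotProduct_mulVec, mulVec_mulVec]

lemma star_dotProduct_mul_conjTranspose_mulVec {m α : Type*} [Fintype m] [Fintype α]
    (X : Matrix m α ℂ) (x : m → ℂ) :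
    star x ⬝ᵥ (X * Xᴴ) *ᵥ x = star (Xᴴ *ᵥ x) ⬝ᵥ (Xᴴ *ᵥ x) := by
  rw [← mulVec_mulVec, dotProduct_mulVec, star_mulVec, conjTranspose_conjTranspose]

lemma mul_vecMulVec_star_mul_conjTranspose {m α : Type*} [Fintype α] (M : Matrix m α ℂ)
    (x : α → ℂ) : M * vecMulVec x (star x) * Mᴴ = vecMulVec (M *ᵥ x) (star (M *ᵥ x)) := by
  rw [mul_vecMulVec, vecMulVec_mul, star_mulVec]

namespace Matrix.IsHermitian

variable {m : Type*} [Fintype m] [DecidableEq m] {M : Matrix m m ℂ} (hM : M.IsHermitian)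
include hM

lemma inner_eigenvectorBasis_mulVec (x : m → ℂ) (j : m) :
    ⟪hM.eigenvectorBasis j, WithLp.toLp 2 (M *ᵥ x)⟫_ℂ
      = hM.eigenvalues j * ⟪hM.eigenvectorBasis j, WithLp.toLp 2 x⟫_ℂ := by
  have h : star ⇑(hM.eigenvectorBasis j) ᵥ* M = star (M *ᵥ ⇑(hM.eigenvectorBasis j)) := by
    rw [star_mulVec, hM.eq]
  rw [EuclideanSpace.inner_eq_star_dotProduct, EuclideanSpace.inner_eq_star_dotProduct,
    dotProduct_comm, dotProduct_mulVec, h, hM.mulVec_eigenvectorBasis, star_smul, smul_dotProduct,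
    dotProduct_comm]
  simp [Complex.real_smul]

lemma re_dotProduct_mulVec_eq_sum_eigenvalues (x : m → ℂ) :
    (star x ⬝ᵥ M *ᵥ x).re
      = ∑ j, hM.eigenvalues j * ‖⟪hM.eigenvectorBasis j, WithLp.toLp 2 x⟫_ℂ‖ ^ 2 := by
  have h := hM.eigenvectorBasis.sum_inner_mul_inner (WithLp.toLp 2 x) (WithLp.toLp 2 (M *ᵥ x))
  rw [dotProduct_comm, ← EuclideanSpace.inner_toLp_toLp, ← h, Complex.re_sum]
  refine Finset.sum_congr rfl fun j _ => ?_
  rw [hM.inner_eigenvectorBasis_mulVec, mul_left_comm, Complex.re_ofReal_mul, ← inner_conj_symm,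
    RCLike.conj_mul]
  norm_cast

lemma eigenvalues_le_maxEig (j : m) : hM.eigenvalues j ≤ maxEig M := by
  rw [maxEig, dif_pos hM]
  refine le_csSup ?_ ⟨j, rfl⟩
  refine ((Set.finite_range hM.eigenvalues).subset ?_).bddAbove
  rintro _ ⟨i, rfl⟩
  exact ⟨i, rfl⟩

lemma re_dotProduct_mulVec_le_maxEig (x : m → ℂ) :
    (star x ⬝ᵥ M *ᵥ x).re ≤ maxEig M * (star x ⬝ᵥ x).re := by
  rw [hM.re_dotProduct_mulVec_eq_sum_eigenvalues, re_star_dotProduct_self_eq_norm_sq,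
    ← hM.eigenvectorBasis.sum_sq_norm_inner_right, Finset.mul_sum]
  gcongr with j
  exact hM.eigenvalues_le_maxEig j

noncomputable def eigenProj (S : Finset m) : Matrix m m ℂ :=
  Unitary.conjStarAlgAut ℂ _ hM.eigenvectorUnitary (diagonal fun i => if i ∈ S then 1 else 0)

lemma conjTranspose_eigenProj_mul_self (S : Finset m) :
    (hM.eigenProj S)ᴴ * hM.eigenProj S = hM.eigenProj S := by
  rw [← star_eq_conjTranspose, eigenProj, ← map_star, ← map_mul, star_eq_conjTranspose,
    diagonal_conjTranspose, diagonal_mul_diagonal]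
  congr 2
  ext i
  by_cases hi : i ∈ S <;> simp [hi]

lemma one_sub_eigenProj (S : Finset m) : 1 - hM.eigenProj S = hM.eigenProj Sᶜ := by
  rw [eigenProj, eigenProj, ← map_one (Unitary.conjStarAlgAut ℂ _ hM.eigenvectorUnitary),
    ← map_sub, ← diagonal_one, diagonal_sub]
  congr 2
  ext i
  split_ifs <;> simp_all

lemma rank_eigenProj_le (S : Finset m) : (hM.eigenProj S).rank ≤ S.card := by
  calc (hM.eigenProj S).rank ≤ (diagonal fun i => if i ∈ S then (1 : ℂ) else 0).rank :=
        (rank_mul_le_left _ _).trans (rank_mul_le_right _ _)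
    _ = S.card := by
        rw [rank_diagonal]
        simp [Fintype.card_subtype]

lemma rank_one_sub_eigenProj_add_card_le (S : Finset m) :
    (1 - hM.eigenProj S).rank + S.card ≤ Fintype.card m := by
  have := hM.rank_eigenProj_le Sᶜ
  rw [← one_sub_eigenProj, Finset.card_compl] at this
  have := S.card_le_univ
  omega

lemma trace_eigenProj_mul (S : Finset m) :
    (hM.eigenProj S * M).trace = ∑ i ∈ S, (hM.eigenvalues i : ℂ) := by
  calc (hM.eigenProj S * M).trace
      = (Unitary.conjStarAlgAut ℂ _ hM.eigenvectorUnitary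
          ((diagonal fun i => if i ∈ S then 1 else 0) *
            diagonal (RCLike.ofReal ∘ hM.eigenvalues))).trace := by
        rw [map_mul, ← hM.spectral_theorem, eigenProj]
    _ = ∑ i ∈ S, (hM.eigenvalues i : ℂ) := by
        rw [Unitary.conjStarAlgAut_apply, trace_mul_cycle, Unitary.coe_star_mul_self, one_mul,
          diagonal_mul_diagonal, trace_diagonal]
        simp [Finset.sum_ite_mem]

end Matrix.IsHermitian

lemma sum_re_star_mulVec_dotProduct_mulVec_le {ι m : Type*} [Fintype m] [DecidableEq m]
    (s : Finset ι) (M : ι → Matrix m m ℂ) (x : m → ℂ) :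
    ∑ k ∈ s, (star (M k *ᵥ x) ⬝ᵥ (M k *ᵥ x)).re
      ≤ maxEig (∑ k ∈ s, (M k)ᴴ * M k) * (star x ⬝ᵥ x).re := by
  have hR : (∑ k ∈ s, (M k)ᴴ * M k).IsHermitian :=
    isSelfAdjoint_sum s fun k _ => isHermitian_conjTranspose_mul_self (M k)
  calc ∑ k ∈ s, (star (M k *ᵥ x) ⬝ᵥ (M k *ᵥ x)).re
      = (star x ⬝ᵥ (∑ k ∈ s, (M k)ᴴ * M k) *ᵥ x).re := by
        simp only [star_mulVec_dotProduct_mulVec, sum_mulVec, dotProduct_sum, Complex.re_sum]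
    _ ≤ maxEig (∑ k ∈ s, (M k)ᴴ * M k) * (star x ⬝ᵥ x).re := hR.re_dotProduct_mulVec_le_maxEig x

section Bathtub

variable {ι : Type*} [Fintype ι] [DecidableEq ι] {n : ℕ} (μ : ι → ℝ)

lemma Finset.exists_card_eq_forall_le_of_notMem (hn : n ≤ Fintype.card ι) :
    ∃ s : Finset ι, s.card = n ∧ ∀ i ∈ s, ∀ j ∉ s, μ i ≤ μ j := by
  obtain ⟨s, hs, hmin⟩ := Finset.exists_min_image (Finset.univ.powersetCard n)
    (fun s => ∑ i ∈ s, μ i) (Finset.powersetCard_nonempty.2 (by simpa using hn))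
  rw [Finset.mem_powersetCard_univ] at hs
  refine ⟨s, hs, fun i hi j hj => ?_⟩
  have hj' : j ∉ s.erase i := fun h => hj (Finset.mem_of_mem_erase h)
  have hswap := hmin (insert j (s.erase i)) <| by
    rw [Finset.mem_powersetCard_univ, Finset.card_insert_of_notMem hj',
      Finset.card_erase_of_mem hi, hs, Nat.sub_add_cancel (hs ▸ Finset.card_pos.2 ⟨i, hi⟩)]
  rw [Finset.sum_insert hj', ← Finset.add_sum_erase s μ hi] at hswap
  linarith

/-- The bathtub principle. -/
lemma sum_le_sum_mul_of_forall_le {s : Finset ι} (hs : s.card = n)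
    (hsep : ∀ i ∈ s, ∀ j ∉ s, μ i ≤ μ j) {t : ι → ℝ} (ht0 : ∀ j, 0 ≤ t j) (ht1 : ∀ j, t j ≤ 1)
    (htn : ∑ j, t j = n) :
    ∑ i ∈ s, μ i ≤ ∑ j, μ j * t j := by
  rcases s.eq_empty_or_nonempty with rfl | hne
  · have ht : ∀ j, t j = 0 := by
      simpa [← hs, Finset.sum_eq_zero_iff_of_nonneg fun j _ => ht0 j] using htn
    simp [ht]
  obtain ⟨i₀, hi₀, hmax⟩ := s.exists_max_image μ hne
  have hdiff : ∑ j, μ j * t j - ∑ i ∈ s, μ i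
      = ∑ j, (μ j - μ i₀) * (t j - if j ∈ s then 1 else 0) := by
    simp only [mul_sub, sub_mul, Finset.sum_sub_distrib, mul_ite, mul_one, mul_zero,
      ← Finset.mul_sum, htn, Finset.sum_ite_mem, Finset.univ_inter, Finset.sum_const, hs,
      nsmul_eq_mul]
    ring
  have hterm : ∀ j, 0 ≤ (μ j - μ i₀) * (t j - if j ∈ s then 1 else 0) := fun j => by
    split_ifs with hj
    · exact mul_nonneg_of_nonpos_of_nonpos (by linarith [hmax j hj]) (by linarith [ht1 j])
    · exact mul_nonneg (by linarith [hsep i₀ hi₀ j hj]) (by linarith [ht0 j])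
  linarith [Finset.sum_nonneg fun j (_ : j ∈ Finset.univ) => hterm j]

end Bathtub

section Chi

variable {D n : ℕ} {M : Matrix (Fin D) (Fin D) ℂ} (hM : M.IsHermitian)
include hM

lemma finite_chi_set :
    {x : ℝ | ∃ s : Finset (Fin D), s.card = n ∧ x = ∑ i ∈ s, hM.eigenvalues i}.Finite := by
  refine (Set.finite_range fun s : Finset (Fin D) => ∑ i ∈ s, hM.eigenvalues i).subset ?_
  rintro _ ⟨s, -, rfl⟩
  exact ⟨s, rfl⟩

lemma chi_le_sum_eigenvalues {s : Finset (Fin D)} (hs : s.card = n) :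
    chi n M ≤ ∑ i ∈ s, hM.eigenvalues i := by
  rw [chi, dif_pos hM]
  exact csInf_le (finite_chi_set hM).bddBelow ⟨s, hs, rfl⟩

lemma exists_card_eq_chi_eq_sum_eigenvalues (hn : n ≤ D) :
    ∃ s : Finset (Fin D), s.card = n ∧ chi n M = ∑ i ∈ s, hM.eigenvalues i := by
  obtain ⟨s, -, hs⟩ := (Finset.univ : Finset (Fin D)).exists_subset_card_eq (by simpa using hn)
  rw [chi, dif_pos hM]
  refine Set.Nonempty.csInf_mem ?_ (finite_chi_set hM)
  exact ⟨_, s, hs, rfl⟩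

/-- Ky Fan's minimum principle. -/
theorem chi_le_sum_re_dotProduct_mulVec {p : Fin n → EuclideanSpace ℂ (Fin D)}
    (hp : Orthonormal ℂ p) :
    chi n M ≤ ∑ i, (star ⇑(p i) ⬝ᵥ M *ᵥ ⇑(p i)).re := by
  set t : Fin D → ℝ := fun j => ∑ i, ‖⟪hM.eigenvectorBasis j, p i⟫_ℂ‖ ^ 2 with ht
  have ht0 : ∀ j, 0 ≤ t j := fun j => by positivity
  have ht1 : ∀ j, t j ≤ 1 := fun j =>
    calc t j = ∑ i, ‖⟪p i, hM.eigenvectorBasis j⟫_ℂ‖ ^ 2 := by simp only [ht, norm_inner_symm]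
      _ ≤ ‖hM.eigenvectorBasis j‖ ^ 2 := hp.sum_inner_products_le _
      _ = 1 := by simp [hM.eigenvectorBasis.orthonormal.1 j]
  have htn : ∑ j, t j = n := by
    rw [ht, Finset.sum_comm]
    simp [hM.eigenvectorBasis.sum_sq_norm_inner_right, hp.1]
  have hn : n ≤ Fintype.card (Fin D) := by
    simpa using hp.linearIndependent.fintype_card_le_finrank
  obtain ⟨s, hs, hsep⟩ := Finset.exists_card_eq_forall_le_of_notMem hM.eigenvalues hn
  calc chi n M ≤ ∑ i ∈ s, hM.eigenvalues i := chi_le_sum_eigenvalues hM hs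
    _ ≤ ∑ j, hM.eigenvalues j * t j := sum_le_sum_mul_of_forall_le _ hs hsep ht0 ht1 htn
    _ = ∑ i, (star ⇑(p i) ⬝ᵥ M *ᵥ ⇑(p i)).re := by
      simp only [ht, Finset.mul_sum, hM.re_dotProduct_mulVec_eq_sum_eigenvalues, WithLp.toLp_ofLp]
      exact Finset.sum_comm

end Chi

section Orthonormal

variable {m α : Type*} [Fintype m] [Fintype α] {n : ℕ}

lemma exists_orthonormal_mulVec_eq_zero [DecidableEq m] {m' : Type*} [Fintype m']
    (W : Matrix m' m ℂ) (h : W.rank + n ≤ Fintype.card m) :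
    ∃ p : Fin n → EuclideanSpace ℂ m, Orthonormal ℂ p ∧ ∀ i, W *ᵥ ⇑(p i) = 0 := by
  have hrank : W.rank = Module.finrank ℂ (LinearMap.range (toEuclideanLin W)) :=
    W.rank_eq_finrank_range_toLin (PiLp.basisFun 2 ℂ m') (PiLp.basisFun 2 ℂ m)
  have hK : n ≤ Module.finrank ℂ (LinearMap.ker (toEuclideanLin W)) := by
    have := LinearMap.finrank_range_add_finrank_ker (toEuclideanLin W)
    rw [finrank_euclideanSpace] at this
    omega
  let b := stdOrthonormalBasis ℂ (LinearMap.ker (toEuclideanLin W))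
  refine ⟨fun i => (b (Fin.castLE hK i) : EuclideanSpace ℂ m), ?_, fun i => ?_⟩
  · exact (b.orthonormal.comp _ (Fin.castLE_injective hK)).comp_linearIsometry
      (LinearMap.ker (toEuclideanLin W)).subtypeₗᵢ
  · exact congrArg WithLp.ofLp (b (Fin.castLE hK i)).2

/-- Bessel's inequality, applied to the columns of `X`. -/
lemma sum_re_dotProduct_mul_conjTranspose_le (X : Matrix m α ℂ)
    {p : Fin n → EuclideanSpace ℂ m} (hp : Orthonormal ℂ p) :
    ∑ i, (star ⇑(p i) ⬝ᵥ (X * Xᴴ) *ᵥ ⇑(p i)).re ≤ ∑ a, ∑ j, ‖X j a‖ ^ 2 := by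
  have hcol : ∀ i a, (Xᴴ *ᵥ ⇑(p i)) a = ⟪WithLp.toLp 2 fun j => X j a, p i⟫_ℂ := fun i a => by
    rw [EuclideanSpace.inner_eq_star_dotProduct, dotProduct_comm]
    rfl
  calc ∑ i, (star ⇑(p i) ⬝ᵥ (X * Xᴴ) *ᵥ ⇑(p i)).re
      = ∑ a, ∑ i, ‖⟪p i, WithLp.toLp 2 fun j => X j a⟫_ℂ‖ ^ 2 := by
        simp only [star_dotProduct_mul_conjTranspose_mulVec, re_star_dotProduct_self_eq_norm_sq,
          EuclideanSpace.norm_sq_eq, hcol, norm_inner_symm]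
        exact Finset.sum_comm
    _ ≤ ∑ a, ‖WithLp.toLp 2 fun j => X j a‖ ^ 2 :=
        Finset.sum_le_sum fun a _ => hp.sum_inner_products_le _
    _ = ∑ a, ∑ j, ‖X j a‖ ^ 2 := by simp only [EuclideanSpace.norm_sq_eq]

variable {D : ℕ}

lemma chi_mul_conjTranspose_le {K K' : Matrix (Fin D) α ℂ}
    {p : Fin n → EuclideanSpace ℂ (Fin D)} (hp : Orthonormal ℂ p)
    (hKK' : ∀ i, Kᴴ *ᵥ ⇑(p i) = K'ᴴ *ᵥ ⇑(p i)) :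
    chi n (K * Kᴴ) ≤ ∑ a, ∑ j, ‖K' j a‖ ^ 2 :=
  calc chi n (K * Kᴴ) ≤ ∑ i, (star ⇑(p i) ⬝ᵥ (K * Kᴴ) *ᵥ ⇑(p i)).re :=
        chi_le_sum_re_dotProduct_mulVec (isHermitian_mul_conjTranspose_self K) hp
    _ = ∑ i, (star ⇑(p i) ⬝ᵥ (K' * K'ᴴ) *ᵥ ⇑(p i)).re := by
        simp only [star_dotProduct_mul_conjTranspose_mulVec, hKK']
    _ ≤ ∑ a, ∑ j, ‖K' j a‖ ^ 2 := sum_re_dotProduct_mul_conjTranspose_le K' hp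

end Orthonormal

section Bipartite

variable {α β : Type*} [Fintype α] [Fintype β]

/-- Transposed so that `Tr_A |φ⟩⟨φ| = K * Kᴴ`. -/
def coeffMatrix (φ : α × β → ℂ) : Matrix β α ℂ := Matrix.of fun j a => φ (a, j)

lemma ptraceA_vecMulVec_eq {DA DB : ℕ} (φ : Fin DA × Fin DB → ℂ) :
    ptraceA (vecMulVec φ (star φ)) = coeffMatrix φ * (coeffMatrix φ)ᴴ := by
  ext j j'
  simp [ptraceA, coeffMatrix, mul_apply, vecMulVec_apply]

lemma coeffMatrix_kronecker_mulVec (A : Matrix α α ℂ) (B : Matrix β β ℂ) (φ : α × β → ℂ) :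
    coeffMatrix ((A ⊗ₖ B) *ᵥ φ) = B * coeffMatrix φ * Aᵀ := by
  ext j a
  simp only [coeffMatrix, of_apply, mulVec, dotProduct, kroneckerMap_apply, mul_apply,
    transpose_apply, Fintype.sum_prod_type, Finset.sum_mul]
  exact Finset.sum_congr rfl fun _ _ => Finset.sum_congr rfl fun _ _ => by ring

lemma sum_norm_sq_coeffMatrix (φ : α × β → ℂ) :
    ∑ a, ∑ j, ‖coeffMatrix φ j a‖ ^ 2 = (star φ ⬝ᵥ φ).re := by
  rw [re_star_dotProduct_self_eq_norm_sq, EuclideanSpace.norm_sq_eq, Fintype.sum_prod_type]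
  rfl

lemma star_dotProduct_eq_trace_coeffMatrix (φ φ' : α × β → ℂ) :
    star φ ⬝ᵥ φ' = (coeffMatrix φ' * (coeffMatrix φ)ᴴ).trace := by
  simp only [dotProduct, trace, diag_apply, mul_apply, coeffMatrix, of_apply, conjTranspose_apply,
    Fintype.sum_prod_type, Pi.star_apply]
  rw [Finset.sum_comm]
  exact Finset.sum_congr rfl fun _ _ => Finset.sum_congr rfl fun _ _ => mul_comm _ _

lemma star_dotProduct_one_kronecker_mulVec {DA DB : ℕ}
    (Q : Matrix (Fin DB) (Fin DB) ℂ) (ψ : Fin DA × Fin DB → ℂ) :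
    star ψ ⬝ᵥ ((1 ⊗ₖ Q) *ᵥ ψ) = (Q * ptraceA (vecMulVec ψ (star ψ))).trace := by
  rw [star_dotProduct_eq_trace_coeffMatrix, coeffMatrix_kronecker_mulVec, transpose_one,
    Matrix.mul_one, ptraceA_vecMulVec_eq, Matrix.mul_assoc]

lemma re_star_dotProduct_self_one_kronecker_eigenProj_mulVec {DA DB : ℕ}
    (ψ : Fin DA × Fin DB → ℂ) (hρ : (ptraceA (vecMulVec ψ (star ψ))).IsHermitian)
    (S : Finset (Fin DB)) :
    (star (((1 : Matrix (Fin DA) (Fin DA) ℂ) ⊗ₖ hρ.eigenProj S) *ᵥ ψ) ⬝ᵥ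
      (((1 : Matrix (Fin DA) (Fin DA) ℂ) ⊗ₖ hρ.eigenProj S) *ᵥ ψ)).re
      = ∑ i ∈ S, hρ.eigenvalues i := by
  rw [star_mulVec_dotProduct_mulVec, conjTranspose_kronecker, conjTranspose_one,
    ← mul_kronecker_mul, Matrix.one_mul, hρ.conjTranspose_eigenProj_mul_self,
    star_dotProduct_one_kronecker_mulVec, hρ.trace_eigenProj_mul]
  simp

end Bipartite

open scoped ComplexOrder in
lemma chi_ptraceA_kronecker_le {DA DB n : ℕ} (A : Matrix (Fin DA) (Fin DA) ℂ)
    (B P : Matrix (Fin DB) (Fin DB) ℂ) (ψ : Fin DA × Fin DB → ℂ) (hP : (1 - P).rank + n ≤ DB) :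
    chi n (ptraceA ((A ⊗ₖ B) * vecMulVec ψ (star ψ) * (A ⊗ₖ B)ᴴ))
      ≤ (star ((A ⊗ₖ B) *ᵥ ((1 ⊗ₖ P) *ᵥ ψ)) ⬝ᵥ ((A ⊗ₖ B) *ᵥ ((1 ⊗ₖ P) *ᵥ ψ))).re := by
  obtain ⟨p, hp, hker⟩ := exists_orthonormal_mulVec_eq_zero (B * (1 - P))ᴴ (n := n) <| by
    have := rank_mul_le_right B (1 - P)
    rw [rank_conjTranspose, Fintype.card_fin]
    omega
  rw [mul_vecMulVec_star_mul_conjTranspose, ptraceA_vecMulVec_eq, mulVec_mulVec,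
    ← mul_kronecker_mul, Matrix.mul_one, ← sum_norm_sq_coeffMatrix, coeffMatrix_kronecker_mulVec,
    coeffMatrix_kronecker_mulVec]
  refine chi_mul_conjTranspose_le hp fun i => ?_
  have hsplit : B * coeffMatrix ψ * Aᵀ - B * P * coeffMatrix ψ * Aᵀ
      = B * (1 - P) * (coeffMatrix ψ * Aᵀ) := by
    simp only [mul_sub, Matrix.mul_one, Matrix.sub_mul, Matrix.mul_assoc]
  rw [← sub_eq_zero, ← sub_mulVec, ← conjTranspose_sub, hsplit, conjTranspose_mul,
    ← mulVec_mulVec, hker i, mulVec_zero]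

theorem stmt7_general {D N : ℕ} (A B : Fin N → Matrix (Fin D) (Fin D) ℂ)
    (ψ : Fin D × Fin D → ℂ)
    (n : ℕ) (hnD : n ≤ D) :
    ∑ k : Fin N,
      chi n (ptraceA (((A k) ⊗ₖ (B k)) * Matrix.vecMulVec ψ (star ψ) * ((A k) ⊗ₖ (B k))ᴴ))
      ≤ maxEig (∑ k : Fin N, ((A k)ᴴ * (A k)) ⊗ₖ ((B k)ᴴ * (B k))) *
        chi n (ptraceA (Matrix.vecMulVec ψ (star ψ))) := by
  have hρ : (ptraceA (vecMulVec ψ (star ψ))).IsHermitian := by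
    rw [ptraceA_vecMulVec_eq]
    exact isHermitian_mul_conjTranspose_self _
  obtain ⟨S, hS, hχ⟩ := exists_card_eq_chi_eq_sum_eigenvalues hρ hnD
  have hP : (1 - hρ.eigenProj S).rank + n ≤ D := by
    simpa [hS] using hρ.rank_one_sub_eigenProj_add_card_le S
  have hR : ∀ k, ((A k)ᴴ * A k) ⊗ₖ ((B k)ᴴ * B k) = (A k ⊗ₖ B k)ᴴ * (A k ⊗ₖ B k) := fun k => by
    rw [conjTranspose_kronecker, mul_kronecker_mul]
  simp only [hR]
  set ψS := ((1 : Matrix (Fin D) (Fin D) ℂ) ⊗ₖ hρ.eigenProj S) *ᵥ ψ with hψS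
  calc _ ≤ ∑ k, (star ((A k ⊗ₖ B k) *ᵥ ψS) ⬝ᵥ ((A k ⊗ₖ B k) *ᵥ ψS)).re :=
        Finset.sum_le_sum fun k _ => chi_ptraceA_kronecker_le (A k) (B k) _ ψ hP
    _ ≤ _ * (star ψS ⬝ᵥ ψS).re := sum_re_star_mulVec_dotProduct_mulVec_le _ _ ψS
    _ = _ := by rw [hψS, re_star_dotProduct_self_one_kronecker_eigenProj_mulVec, hχ]

/-- Theorem 2 of the paper: for product operators `A_k ⊗ B_k` and a pure state `ψ`,
`Σ_k χₙ(Tr_A[(A_k⊗B_k)|ψ⟩⟨ψ|(A_k⊗B_k)ᴴ]) ≤ ‖R‖ χₙ(Tr_A|ψ⟩⟨ψ|)` where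
`R = Σ_k A_kᴴA_k ⊗ B_kᴴB_k`. -/
theorem stmt7 {D N : ℕ} (A B : Fin N → Matrix (Fin D) (Fin D) ℂ)
    (ψ : Fin D × Fin D → ℂ) (hψ : star ψ ⬝ᵥ ψ = 1)
    (n : ℕ) (hn1 : 1 ≤ n) (hnD : n ≤ D) :
    ∑ k : Fin N,
      chi n (ptraceA (((A k) ⊗ₖ (B k)) * Matrix.vecMulVec ψ (star ψ) * ((A k) ⊗ₖ (B k))ᴴ))
      ≤ maxEig (∑ k : Fin N, ((A k)ᴴ * (A k)) ⊗ₖ ((B k)ᴴ * (B k))) *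
        chi n (ptraceA (Matrix.vecMulVec ψ (star ψ))) :=
  stmt7_general A B ψ n hnD
end

section
/- For positive semidefinite operators M, M₁, ..., M_N on a D-dimensional space with M = Σ_k M_k, and any 1 ≤ n ≤ D, Σ_k χ_n(M_k) ≤ χ_n(M) need not hold in general, but it does hold when each M_k = A_k ψ ψ† A_k† with Σ_k A_k†A_k ≤ c·I: namely Σ_k χ_n(A_k ψψ† A_k†) ≤ c · χ_n(ψψ†) for any D×D matrix ψ whose singular value decomposition is diagonal with increasing entries. -/
open Matrix BigOperators ComplexOrder

/-!
Ky Fan's minimum principle: if `M = U diag(λ) Uᴴ`, the sum of the diagonal entries of `M` over an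
`n`-set `s` is `∑ⱼ λⱼ wⱼ` with weights `wⱼ = ∑_{i ∈ s} |Uᵢⱼ|² ∈ [0, 1]` summing to `n`, hence at
least `χₙ(M)`. As `A ψψᴴ Aᴴ` and `(Aψ)ᴴ(Aψ)` have the same spectrum, `χₙ(A_k ψψᴴ A_kᴴ)` is at most
`∑_{i ∈ s} dᵢ² (A_kᴴ A_k)ᵢᵢ` for the set `s` of the `n` smallest `dᵢ²`. Summing over `k` and using
`(∑_k A_kᴴ A_k)ᵢᵢ ≤ c` gives `c ∑_{i ∈ s} dᵢ² = c χₙ(ψψᴴ)`.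
-/

section MinSubsetSum

variable {ι : Type*} [Fintype ι]

def subsetSums (n : ℕ) (f : ι → ℝ) : Set ℝ :=
  {x : ℝ | ∃ s : Finset ι, s.card = n ∧ x = ∑ i ∈ s, f i}

noncomputable def minSubsetSum (n : ℕ) (f : ι → ℝ) : ℝ :=
  sInf (subsetSums n f)

lemma finite_subsetSums (n : ℕ) (f : ι → ℝ) : (subsetSums n f).Finite :=
  (Set.finite_range fun s : Finset ι => ∑ i ∈ s, f i).subset fun _ ⟨s, _, hx⟩ => ⟨s, hx.symm⟩

lemma minSubsetSum_le_sum (f : ι → ℝ) {n : ℕ} {s : Finset ι} (hs : s.card = n) :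
    minSubsetSum n f ≤ ∑ i ∈ s, f i :=
  csInf_le (finite_subsetSums n f).bddBelow ⟨s, hs, rfl⟩

lemma exists_sum_eq_minSubsetSum (f : ι → ℝ) {n : ℕ} (hn : n ≤ Fintype.card ι) :
    ∃ s : Finset ι, s.card = n ∧ ∑ i ∈ s, f i = minSubsetSum n f := by
  obtain ⟨s, -, hs⟩ := Finset.exists_subset_card_eq (s := Finset.univ) (by simpa using hn)
  have hne : (subsetSums n f).Nonempty := ⟨∑ i ∈ s, f i, s, hs, rfl⟩
  obtain ⟨t, ht, hsum⟩ := hne.csInf_mem (finite_subsetSums n f)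
  exact ⟨t, ht, hsum.symm⟩

/-- Take a minimizing `n`-set `t` and `λ = max_t f`. Minimality forces `f ≥ λ` off `t`, so every
term of `∑ᵢ (fᵢ - λ)(wᵢ - 1_t(i))` is nonnegative, and that sum is `∑ᵢ fᵢ wᵢ - ∑_t f`. -/
lemma minSubsetSum_le_sum_mul (f : ι → ℝ) {n : ℕ} (hn : 1 ≤ n) {w : ι → ℝ}
    (hw0 : ∀ i, 0 ≤ w i) (hw1 : ∀ i, w i ≤ 1) (hw : ∑ i, w i = n) :
    minSubsetSum n f ≤ ∑ i, f i * w i := by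
  classical
  have hcard : n ≤ Fintype.card ι := by
    have : ∑ i, w i ≤ ∑ _i : ι, (1 : ℝ) := Finset.sum_le_sum fun i _ => hw1 i
    exact_mod_cast (by simpa [hw] using this : (n : ℝ) ≤ Fintype.card ι)
  obtain ⟨t, ht, hmin⟩ := exists_sum_eq_minSubsetSum f hcard
  have hswap : ∀ j ∈ t, ∀ j' ∉ t, f j ≤ f j' := by
    intro j hj j' hj'
    have hj'' : j' ∉ t.erase j := fun h => hj' (Finset.mem_of_mem_erase h)
    have := minSubsetSum_le_sum f (n := n) (s := insert j' (t.erase j))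
      (by rw [Finset.card_insert_of_notMem hj'', Finset.card_erase_of_mem hj, ht]; omega)
    rw [← hmin, Finset.sum_insert hj'', ← Finset.add_sum_erase t f hj] at this
    linarith
  obtain ⟨j₀, hj₀, hmax⟩ := Finset.exists_max_image t f (Finset.card_pos.mp (by omega))
  have hnonneg : 0 ≤ ∑ i, (f i - f j₀) * (w i - if i ∈ t then 1 else 0) :=
    Finset.sum_nonneg fun i _ => by
      by_cases hi : i ∈ t
      · simp only [hi, if_true]
        exact mul_nonneg_of_nonpos_of_nonpos (by linarith [hmax i hi]) (by linarith [hw1 i])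
      · simp only [hi, if_false, sub_zero]
        exact mul_nonneg (by linarith [hswap j₀ hj₀ i hi]) (hw0 i)
  have hexpand : ∑ i, (f i - f j₀) * (w i - if i ∈ t then 1 else 0)
      = ∑ i, f i * w i - ∑ i ∈ t, f i - f j₀ * (∑ i, w i - t.card) := by
    simp only [mul_sub, sub_mul, Finset.sum_sub_distrib, mul_ite, mul_one, mul_zero,
      Finset.sum_ite_mem, Finset.univ_inter, ← Finset.mul_sum, Finset.sum_const, nsmul_eq_mul]
    ring
  rw [hw, ht, sub_self, mul_zero, sub_zero] at hexpand
  linarith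

end MinSubsetSum

section Unitary

variable {ι 𝕜 : Type*} [Fintype ι] [DecidableEq ι] [RCLike 𝕜]

lemma re_mul_diagonal_mul_star_apply_self (U : Matrix ι ι 𝕜) (x : ι → ℝ) (i : ι) :
    RCLike.re ((U * diagonal (RCLike.ofReal ∘ x) * star U : Matrix ι ι 𝕜) i i) =
      ∑ j, x j * ‖U i j‖ ^ 2 := by
  rw [mul_apply, map_sum]
  simp only [mul_diagonal, star_apply, Function.comp_apply]
  refine Finset.sum_congr rfl fun j _ => ?_
  rw [mul_right_comm, RCLike.star_def, RCLike.mul_conj, mul_comm, ← RCLike.ofReal_pow,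
    ← RCLike.ofReal_mul, RCLike.ofReal_re]

lemma sum_norm_sq_row_eq_one {U : Matrix ι ι 𝕜} (hU : U ∈ unitaryGroup ι 𝕜) (i : ι) :
    ∑ j, ‖U i j‖ ^ 2 = 1 := by
  simpa [(mem_unitaryGroup_iff).mp hU] using (re_mul_diagonal_mul_star_apply_self U 1 i).symm

lemma sum_norm_sq_col_eq_one {U : Matrix ι ι 𝕜} (hU : U ∈ unitaryGroup ι 𝕜) (j : ι) :
    ∑ i, ‖U i j‖ ^ 2 = 1 := by
  simpa using sum_norm_sq_row_eq_one (Unitary.star_mem hU) j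

lemma minSubsetSum_le_sum_re_mul_diagonal_mul_star {U : Matrix ι ι 𝕜}
    (hU : U ∈ unitaryGroup ι 𝕜) (x : ι → ℝ) {n : ℕ} (hn : 1 ≤ n) {s : Finset ι}
    (hs : s.card = n) :
    minSubsetSum n x ≤
      ∑ i ∈ s, RCLike.re ((U * diagonal (RCLike.ofReal ∘ x) * star U : Matrix ι ι 𝕜) i i) := by
  simp only [re_mul_diagonal_mul_star_apply_self]
  rw [Finset.sum_comm]
  simp only [← Finset.mul_sum]
  refine minSubsetSum_le_sum_mul x hn (fun j => Finset.sum_nonneg fun i _ => by positivity)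
    (fun j => ?_) ?_
  · calc ∑ i ∈ s, ‖U i j‖ ^ 2 ≤ ∑ i, ‖U i j‖ ^ 2 :=
          Finset.sum_le_sum_of_subset_of_nonneg s.subset_univ fun _ _ _ => by positivity
      _ = 1 := sum_norm_sq_col_eq_one hU j
  · rw [Finset.sum_comm]
    simp [sum_norm_sq_row_eq_one hU, hs]

end Unitary

section Chi

variable {D n : ℕ}

lemma chi_eq_minSubsetSum {M : Matrix (Fin D) (Fin D) ℂ} (hM : M.IsHermitian) :
    chi n M = minSubsetSum n hM.eigenvalues := by
  rw [chi, dif_pos hM]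
  rfl

lemma chi_mul_conjTranspose_self (X : Matrix (Fin D) (Fin D) ℂ) :
    chi n (X * Xᴴ) = chi n (Xᴴ * X) := by
  rw [chi_eq_minSubsetSum (isHermitian_mul_conjTranspose_self X),
    chi_eq_minSubsetSum (isHermitian_conjTranspose_mul_self X),
    (IsHermitian.eigenvalues_eq_eigenvalues_iff _ _).2 (charpoly_mul_comm _ _)]

lemma chi_le_sum_re_diag (hn : 1 ≤ n) {M : Matrix (Fin D) (Fin D) ℂ} (hM : M.IsHermitian)
    {s : Finset (Fin D)} (hs : s.card = n) :
    chi n M ≤ ∑ i ∈ s, (M i i).re := by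
  rw [chi_eq_minSubsetSum hM]
  conv_rhs => rw [hM.spectral_theorem]
  simpa using minSubsetSum_le_sum_re_mul_diagonal_mul_star hM.eigenvectorUnitary.2
    hM.eigenvalues hn hs

lemma chi_diagonal (hn : 1 ≤ n) (hnD : n ≤ D) (r : Fin D → ℝ) :
    chi n (diagonal fun i => (r i : ℂ)) = minSubsetSum n r := by
  have hM : (diagonal fun i => (r i : ℂ)).IsHermitian :=
    isHermitian_diagonal_of_self_adjoint _ (by ext; simp)
  apply le_antisymm
  · obtain ⟨s, hs, hsum⟩ := exists_sum_eq_minSubsetSum r (by simpa using hnD)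
    simpa [hsum] using chi_le_sum_re_diag hn hM hs
  -- The reverse bound is Ky Fan again, with the roles of `diag r` and `diag λ` exchanged.
  · obtain ⟨t, ht, hsum⟩ := exists_sum_eq_minSubsetSum hM.eigenvalues (by simpa using hnD)
    have hdiag := hM.conjStarAlgAut_star_eigenvectorUnitary
    rw [Unitary.conjStarAlgAut_star_apply] at hdiag
    have h := minSubsetSum_le_sum_re_mul_diagonal_mul_star
      (Unitary.star_mem hM.eigenvectorUnitary.2) r hn ht
    rw [star_star] at h
    rw [chi_eq_minSubsetSum hM, ← hsum]
    simp only [Function.comp_def] at h hdiag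
    simpa [hdiag] using h

end Chi

lemma conjTranspose_mul_self_mul_diagonal_apply_self {ι : Type*} [Fintype ι] [DecidableEq ι]
    (B : Matrix ι ι ℂ) (d : ι → ℝ) (i : ι) :
    ((B * diagonal fun i => (d i : ℂ))ᴴ * (B * diagonal fun i => (d i : ℂ))) i i =
      (d i ^ 2 : ℝ) * (Bᴴ * B) i i := by
  rw [conjTranspose_mul, diagonal_conjTranspose, Matrix.mul_assoc, ← Matrix.mul_assoc Bᴴ,
    diagonal_mul, mul_diagonal]
  simp only [Pi.star_apply, RCLike.star_def, Complex.conj_ofReal, Complex.ofReal_pow]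
  ring

theorem stmt9_general {D N : ℕ} (A : Fin N → Matrix (Fin D) (Fin D) ℂ)
    (c : ℝ)
    (hA : ((c : ℂ) • (1 : Matrix (Fin D) (Fin D) ℂ) -
      ∑ k : Fin N, (A k)ᴴ * (A k)).PosSemidef)
    (d : Fin D → ℝ)
    (ψ : Matrix (Fin D) (Fin D) ℂ)
    (hψ : ψ = Matrix.diagonal (fun i : Fin D => (d i : ℂ)))
    (n : ℕ) (hn1 : 1 ≤ n) (hnD : n ≤ D) :
    ∑ k : Fin N, chi n ((A k) * (ψ * ψᴴ) * (A k)ᴴ) ≤ c * chi n (ψ * ψᴴ) := by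
  have hψψ : ψ * ψᴴ = diagonal fun i => ((d i ^ 2 : ℝ) : ℂ) := by
    rw [hψ, diagonal_conjTranspose, diagonal_mul_diagonal]
    congr 1
    ext i
    simp [sq]
  obtain ⟨s, hs, hsum⟩ := exists_sum_eq_minSubsetSum (fun i => d i ^ 2) (by simpa using hnD)
  have hk : ∀ k, chi n (A k * (ψ * ψᴴ) * (A k)ᴴ) ≤
      ∑ i ∈ s, d i ^ 2 * (((A k)ᴴ * A k) i i).re := fun k => by
    have : A k * (ψ * ψᴴ) * (A k)ᴴ = (A k * ψ) * (A k * ψ)ᴴ := by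
      rw [conjTranspose_mul]; simp only [Matrix.mul_assoc]
    rw [this, chi_mul_conjTranspose_self]
    refine (chi_le_sum_re_diag hn1 (isHermitian_conjTranspose_mul_self _) hs).trans_eq ?_
    simp only [hψ, conjTranspose_mul_self_mul_diagonal_apply_self, Complex.re_ofReal_mul]
  have hQ : ∀ i, (∑ k, ((A k)ᴴ * A k) i i).re ≤ c := fun i => by
    simpa [Matrix.sum_apply] using (Complex.le_def.mp (hA.diag_nonneg (i := i))).1
  calc ∑ k, chi n (A k * (ψ * ψᴴ) * (A k)ᴴ)
      _ ≤ ∑ k, ∑ i ∈ s, d i ^ 2 * (((A k)ᴴ * A k) i i).re := Finset.sum_le_sum fun k _ => hk k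
      _ = ∑ i ∈ s, d i ^ 2 * (∑ k, ((A k)ᴴ * A k) i i).re := by
        simp only [Complex.re_sum, Finset.mul_sum]
        exact Finset.sum_comm
      _ ≤ ∑ i ∈ s, d i ^ 2 * c := by gcongr with i; exact hQ i
      _ = c * chi n (ψ * ψᴴ) := by
        rw [hψψ, chi_diagonal hn1 hnD, ← hsum, Finset.mul_sum]
        simp only [mul_comm]

/-- Special case `B_k = I` of Theorem 2: if `Σ_k A_kᴴA_k ≤ c·I` in the Loewner order
and `ψ` is diagonal with nonnegative increasing diagonal, then
`Σ_k χₙ(A_k ψψᴴ A_kᴴ) ≤ c · χₙ(ψψᴴ)`. -/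
theorem stmt9 {D N : ℕ} (A : Fin N → Matrix (Fin D) (Fin D) ℂ)
    (c : ℝ) (hc : 0 < c)
    (hA : ((c : ℂ) • (1 : Matrix (Fin D) (Fin D) ℂ) -
      ∑ k : Fin N, (A k)ᴴ * (A k)).PosSemidef)
    (d : Fin D → ℝ) (hd0 : ∀ i, 0 ≤ d i) (hdmono : Monotone d)
    (ψ : Matrix (Fin D) (Fin D) ℂ)
    (hψ : ψ = Matrix.diagonal (fun i : Fin D => (d i : ℂ)))
    (n : ℕ) (hn1 : 1 ≤ n) (hnD : n ≤ D) :
    ∑ k : Fin N, chi n ((A k) * (ψ * ψᴴ) * (A k)ᴴ) ≤ c * chi n (ψ * ψᴴ) :=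
  stmt9_general A c hA d ψ hψ n hn1 hnD
end
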